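/- arXiv:1903.07166 — 4 statements merged into one kernel-verified Lean document; each statement's English description precedes it below -/
import Mathlib

section
/- Let (X,d) be a nonempty complete metric space and let S_1,...,S_N : X → X (N ≥ 1) be strict contractions, i.e. each S_i is Lipschitz with Lipschitz constant Lip_{S_i} < 1. Then there exists a unique nonempty compact set K ⊆ X such that K = ⋃_{i=1}^N S_i(K). -/
open EMetric Metric Set TopologicalSpace

private lemma infEdist_image_le_of_lipschitz {X : Type*} [PseudoEMetricSpace X]
    {K : NNReal} {f : X → X} (hf : LipschitzWith K f) (x : X) {s : Set X}
    (hs : s.Nonempty) : infEdist (f x) (f '' s) ≤ K * infEdist x s := by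
  have : Nonempty s := hs.to_subtype
  unfold infEdist
  rw [infEDist, infEDist, iInf_image, ← iInf_subtype'', ← iInf_subtype'',
    ENNReal.mul_iInf (by simp)]
  exact iInf_mono fun y => hf.edist_le_mul x y

private lemma hausdorffEdist_image_le_of_lipschitz {X : Type*} [PseudoEMetricSpace X]
    {K : NNReal} {f : X → X} (hf : LipschitzWith K f) {s t : Set X}
    (hs : s.Nonempty) (ht : t.Nonempty) :
    hausdorffEdist (f '' s) (f '' t) ≤ K * hausdorffEdist s t := by
  apply hausdorffEdist_le_of_infEdist
  · rintro _ ⟨x, hx, rfl⟩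
    exact (infEdist_image_le_of_lipschitz hf x ht).trans
      (mul_le_mul_right (infEdist_le_hausdorffEdist_of_mem hx) _)
  · rintro _ ⟨x, hx, rfl⟩
    refine (infEdist_image_le_of_lipschitz hf x hs).trans (mul_le_mul_right ?_ _)
    unfold hausdorffEdist
    rw [hausdorffEdist_comm]
    exact infEdist_le_hausdorffEdist_of_mem hx

private lemma hausdorffEdist_iUnion_le {X : Type*} [PseudoEMetricSpace X] {ι : Type*}
    (s t : ι → Set X) :
    hausdorffEdist (⋃ i, s i) (⋃ i, t i) ≤ ⨆ i, hausdorffEdist (s i) (t i) := by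
  apply hausdorffEdist_le_of_infEdist
  · rintro x hx
    obtain ⟨i, hi⟩ := mem_iUnion.1 hx
    exact (infEdist_anti (subset_iUnion t i)).trans
      ((infEdist_le_hausdorffEdist_of_mem hi).trans
        (le_iSup (fun j => hausdorffEdist (s j) (t j)) i))
  · rintro x hx
    obtain ⟨i, hi⟩ := mem_iUnion.1 hx
    refine (infEdist_anti (subset_iUnion s i)).trans ?_
    refine le_trans ?_ (le_iSup (fun j => hausdorffEdist (s j) (t j)) i)
    unfold hausdorffEdist
    rw [hausdorffEdist_comm]
    exact infEdist_le_hausdorffEdist_of_mem hi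

/-- **Hutchinson's theorem (existence and uniqueness part).**
If `S 0, ..., S (N-1)` are strict contractions (Lipschitz with constant `< 1`) on a
nonempty complete metric space `X`, with `N ≥ 1`, then there is a unique nonempty
compact set `A ⊆ X` with `A = ⋃ i, S i '' A`. -/
theorem hutchinson_existence_uniqueness
    {X : Type*} [MetricSpace X] [Nonempty X] [CompleteSpace X]
    {N : ℕ} (hN : 1 ≤ N) (S : Fin N → X → X)
    (K : Fin N → NNReal) (hK : ∀ i, K i < 1) (hLip : ∀ i, LipschitzWith (K i) (S i)) :
    ∃! A : Set X, A.Nonempty ∧ IsCompact A ∧ A = ⋃ i, S i '' A := by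
  classical
  have i0 : Fin N := ⟨0, hN⟩
  set c : NNReal := Finset.univ.sup K with hc
  have hc1 : c < 1 := (Finset.sup_lt_iff (by norm_num)).2 fun i _ => hK i
  haveI : Nonempty (NonemptyCompacts X) :=
    ⟨⟨⟨{Classical.arbitrary X}, isCompact_singleton⟩, Set.singleton_nonempty _⟩⟩
  let F : NonemptyCompacts X → NonemptyCompacts X := fun A =>
    ⟨⟨⋃ i, S i '' (A : Set X),
      isCompact_iUnion fun i => A.isCompact.image (hLip i).continuous⟩,
     ⟨S i0 A.nonempty.some,
      Set.mem_iUnion.2 ⟨i0, Set.mem_image_of_mem _ A.nonempty.some_mem⟩⟩⟩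
  have hFcar : ∀ A : NonemptyCompacts X, (F A : Set X) = ⋃ i, S i '' (A : Set X) :=
    fun A => rfl
  have hF : LipschitzWith c F := by
    intro A B
    have h1 : edist (F A) (F B) =
        hausdorffEdist (⋃ i, S i '' (A : Set X)) (⋃ i, S i '' (B : Set X)) := rfl
    have h2 : edist A B = hausdorffEdist (A : Set X) (B : Set X) := rfl
    rw [h1, h2]
    refine (hausdorffEdist_iUnion_le _ _).trans (iSup_le fun i => ?_)
    refine (hausdorffEdist_image_le_of_lipschitz (hLip i) A.nonempty B.nonempty).trans ?_
    exact mul_le_mul_left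
      (ENNReal.coe_le_coe.2 (Finset.le_sup (Finset.mem_univ i))) _
  have hCF : ContractingWith c F := ⟨hc1, hF⟩
  set A0 : NonemptyCompacts X := ContractingWith.fixedPoint F hCF with hA0
  have hfix : F A0 = A0 := hCF.fixedPoint_isFixedPt
  refine ⟨(A0 : Set X), ⟨A0.nonempty, A0.isCompact, ?_⟩, ?_⟩
  · conv_lhs => rw [← hfix]
    rfl
  · rintro B ⟨hBne, hBc, hBeq⟩
    let B' : NonemptyCompacts X := ⟨⟨B, hBc⟩, hBne⟩
    have hB' : F B' = B' := by
      apply NonemptyCompacts.ext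
      rw [hFcar]
      exact hBeq.symm
    have := hCF.fixedPoint_unique (x := B') hB'
    exact congrArg (fun A : NonemptyCompacts X => (A : Set X)) this
end

section
/- Let (X,d_X) and (Y,d_Y) be metric spaces, let M be a stochastic process on X with right-continuous paths started at x ∈ X, and let φ : X → Y be locally α-Hölder regular at x for some α ∈ (0,1). Assume the local walk dimension dimw(X,M;x) exists and equals w, and assume E[τ_M(r)] ∈ (0,∞) and E[τ_{φ∘M}(r)] ∈ (0,∞) for all sufficiently small r > 0. Then the upper local walk dimension of the image process satisfies dimuw(Y, φ∘M; φ(x)) ≤ w/α. -/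
open MeasureTheory Filter Topology

/-- The exit time of the process `M` (with time indexed by `ℝ≥0`) from the open
ball of radius `r` around `x`, as an `ℝ≥0∞`-valued random variable
(`∞` if the process never leaves the ball). -/
noncomputable def exitTime {Ω X : Type*} [MetricSpace X]
    (M : NNReal → Ω → X) (x : X) (r : ℝ) (ω : Ω) : ENNReal :=
  sInf ((fun t : NNReal => (t : ENNReal)) '' {t : NNReal | M t ω ∉ Metric.ball x r})

/-- The expected exit time `E[τ_M(r)]` of `M` from the ball `B(x,r)`. -/
noncomputable def expExitTime {Ω X : Type*} [MetricSpace X] [MeasurableSpace Ω]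
    (P : Measure Ω) (M : NNReal → Ω → X) (x : X) (r : ℝ) : ENNReal :=
  ∫⁻ ω, exitTime M x r ω ∂P

/-- The quotient `log E[τ_M(r)] / log r`, whose limit (resp. limsup) as `r → 0⁺`
is the local walk dimension (resp. upper local walk dimension) of `M` at `x`. -/
noncomputable def logExitRatio {Ω X : Type*} [MetricSpace X] [MeasurableSpace Ω]
    (P : Measure Ω) (M : NNReal → Ω → X) (x : X) (r : ℝ) : ℝ :=
  Real.log (expExitTime P M x r).toReal / Real.log r

/-- `φ` is locally `β`-Hölder continuous at `x`. -/
def LocallyHolderAt {X Y : Type*} [MetricSpace X] [MetricSpace Y]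
    (φ : X → Y) (x : X) (β : ℝ) : Prop :=
  ∃ U ∈ 𝓝 x, ∃ C > (0 : ℝ), ∀ y ∈ U, dist (φ x) (φ y) ≤ C * dist x y ^ β

/-- `φ` is locally `α`-Hölder regular at `x`: `α` is the supremum of all `β > 0`
for which `φ` is locally `β`-Hölder continuous at `x`. -/
def LocallyHolderRegularAt {X Y : Type*} [MetricSpace X] [MetricSpace Y]
    (φ : X → Y) (x : X) (α : ℝ) : Prop :=
  IsLUB {β : ℝ | 0 < β ∧ LocallyHolderAt φ x β} α

lemma exitTime_anti {Ω X : Type*} [MetricSpace X]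
    (M : NNReal → Ω → X) (x : X) {r r' : ℝ} (h : r ≤ r') (ω : Ω) :
    exitTime M x r ω ≤ exitTime M x r' ω := by
  apply sInf_le_sInf (Set.image_mono ?_)
  intro t ht hmem
  exact ht (Metric.ball_subset_ball h hmem)

lemma exitTime_le_image {Ω X Y : Type*} [MetricSpace X] [MetricSpace Y]
    (M : NNReal → Ω → X) (x : X) (φ : X → Y) {ρ r : ℝ}
    (h : ∀ y, dist x y < ρ → dist (φ x) (φ y) < r) (ω : Ω) :
    exitTime M x ρ ω ≤ exitTime (fun t ω => φ (M t ω)) (φ x) r ω := by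
  apply sInf_le_sInf (Set.image_mono ?_)
  intro t ht hmem
  simp only [Set.mem_setOf_eq, Metric.mem_ball] at hmem ht
  rw [dist_comm] at hmem
  exact ht (by rw [dist_comm]; exact h _ hmem)

lemma const_div_log_tendsto (c : ℝ) :
    Tendsto (fun r => c / Real.log r) (𝓝[>] (0:ℝ)) (𝓝 0) := by
  have h1 : Tendsto (fun r : ℝ => -Real.log r) (𝓝[>] (0:ℝ)) atTop :=
    tendsto_neg_atTop_iff.mpr Real.tendsto_log_nhdsGT_zero
  have h2 := h1.const_div_atTop c
  have h3 : Tendsto (fun r : ℝ => -(c / -Real.log r)) (𝓝[>] (0:ℝ)) (𝓝 (-0)) := h2.neg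
  rw [neg_zero] at h3
  refine h3.congr fun r => ?_
  rw [div_neg, neg_neg]

lemma limsup_ratio_le_div {Ω X Y : Type*} [MetricSpace X] [MetricSpace Y] [MeasurableSpace Ω]
    (P : Measure Ω) (M : NNReal → Ω → X) (x : X) (φ : X → Y)
    {β : ℝ} (hβ : 0 < β) (hH : LocallyHolderAt φ x β) {w : ℝ}
    (hdimw : Tendsto (logExitRatio P M x) (𝓝[>] 0) (𝓝 w))
    (hfin : ∀ᶠ r in 𝓝[>] (0 : ℝ),
      expExitTime P M x r ≠ 0 ∧ expExitTime P M x r ≠ ⊤ ∧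
      expExitTime P (fun t ω => φ (M t ω)) (φ x) r ≠ 0 ∧
      expExitTime P (fun t ω => φ (M t ω)) (φ x) r ≠ ⊤) :
    limsup (logExitRatio P (fun t ω => φ (M t ω)) (φ x)) (𝓝[>] 0) ≤ w / β := by
  obtain ⟨U, hU, C, hC, hHold⟩ := hH
  obtain ⟨δ, hδ, hball⟩ := Metric.mem_nhds_iff.mp hU
  set f := logExitRatio P (fun t ω => φ (M t ω)) (φ x) with hf
  set ρ : ℝ → ℝ := fun r => (r / C) ^ (1/β) with hρdef
  have T1 : Tendsto (fun r : ℝ => r / C) (𝓝[>] 0) (𝓝[>] 0) := by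
    apply tendsto_nhdsWithin_of_tendsto_nhds_of_eventually_within
    · have h0 : Tendsto (fun r : ℝ => r / C) (𝓝 0) (𝓝 (0 / C)) := tendsto_id.div_const C
      rw [zero_div] at h0
      exact h0.mono_left nhdsWithin_le_nhds
    · filter_upwards [self_mem_nhdsWithin] with r hr
      exact div_pos hr hC
  have T2 : Tendsto (fun s : ℝ => s ^ (1/β)) (𝓝[>] 0) (𝓝[>] 0) := by
    apply tendsto_nhdsWithin_of_tendsto_nhds_of_eventually_within
    · have h := (Real.continuousAt_rpow_const 0 (1/β) (Or.inr (by positivity))).tendsto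
      rw [Real.zero_rpow (by positivity)] at h
      exact h.mono_left nhdsWithin_le_nhds
    · filter_upwards [self_mem_nhdsWithin] with s hs
      exact Real.rpow_pos_of_pos hs _
  have Tρ : Tendsto ρ (𝓝[>] 0) (𝓝[>] 0) := T2.comp T1
  have Tρ' : Tendsto ρ (𝓝[>] 0) (𝓝 0) := Tρ.mono_right nhdsWithin_le_nhds
  have Tq : Tendsto (fun r => Real.log (ρ r) / Real.log r) (𝓝[>] (0:ℝ)) (𝓝 (1/β)) := by
    have Tmain : Tendsto (fun r => (1 - Real.log C / Real.log r) / β) (𝓝[>] (0:ℝ))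
        (𝓝 ((1 - 0)/β)) := (tendsto_const_nhds.sub (const_div_log_tendsto (Real.log C))).div_const β
    rw [sub_zero] at Tmain
    refine Tmain.congr' ?_
    filter_upwards [Ioo_mem_nhdsGT_of_mem (Set.left_mem_Ico.mpr one_pos)] with r hr
    have hr0 : (0:ℝ) < r := hr.1
    have hrC : 0 < r / C := div_pos hr0 hC
    have hlogr : Real.log r ≠ 0 := ne_of_lt (Real.log_neg hr0 hr.2)
    show (1 - Real.log C / Real.log r) / β = Real.log ((r / C) ^ (1/β)) / Real.log r
    rw [Real.log_rpow hrC, Real.log_div (ne_of_gt hr0) (ne_of_gt hC)]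
    field_simp
    try exact Or.inl trivial
  set h : ℝ → ℝ := fun r => logExitRatio P M x (ρ r) * (Real.log (ρ r) / Real.log r) with hh
  have Th : Tendsto h (𝓝[>] (0:ℝ)) (𝓝 (w * (1/β))) := (hdimw.comp Tρ).mul Tq
  have hev : ∀ᶠ r in 𝓝[>] (0:ℝ), f r ≤ h r := by
    filter_upwards [Ioo_mem_nhdsGT_of_mem (Set.left_mem_Ico.mpr one_pos), hfin,
      Tρ.eventually hfin,
      Tρ'.eventually (eventually_lt_nhds (lt_min hδ one_pos))] with r hr hfr hfρ hρsmall
    have hr0 : (0:ℝ) < r := hr.1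
    have hr1 : r < 1 := hr.2
    have hrC : 0 < r / C := div_pos hr0 hC
    have hρ0 : 0 < ρ r := Real.rpow_pos_of_pos hrC _
    have hρδ : ρ r < δ := lt_of_lt_of_le hρsmall (min_le_left _ _)
    have hρ1 : ρ r < 1 := lt_of_lt_of_le hρsmall (min_le_right _ _)
    have hkey : ∀ y, dist x y < ρ r → dist (φ x) (φ y) < r := by
      intro y hy
      have hyU : y ∈ U := hball (by
        rw [Metric.mem_ball, dist_comm]; exact lt_trans hy hρδ)
      calc dist (φ x) (φ y) ≤ C * dist x y ^ β := hHold y hyU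
        _ < C * (ρ r) ^ β := by
            exact mul_lt_mul_of_pos_left (Real.rpow_lt_rpow dist_nonneg hy hβ) hC
        _ = r := by
            have hpow : ((r / C) ^ (1/β)) ^ β = r / C := by
              rw [← Real.rpow_mul hrC.le, one_div_mul_cancel (ne_of_gt hβ), Real.rpow_one]
            rw [hρdef]
            simp only []
            rw [hpow]
            field_simp
    have hBA : expExitTime P M x (ρ r) ≤ expExitTime P (fun t ω => φ (M t ω)) (φ x) r :=
      lintegral_mono fun ω => exitTime_le_image M x φ hkey ω
    obtain ⟨hB0, hBtop, -, -⟩ := hfρ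
    obtain ⟨-, -, hA0, hAtop⟩ := hfr
    have hb : 0 < (expExitTime P M x (ρ r)).toReal := ENNReal.toReal_pos hB0 hBtop
    have hba : (expExitTime P M x (ρ r)).toReal ≤
        (expExitTime P (fun t ω => φ (M t ω)) (φ x) r).toReal :=
      ENNReal.toReal_mono hAtop hBA
    have hlogba := Real.log_le_log hb hba
    have hlogrneg : Real.log r < 0 := Real.log_neg hr0 hr1
    have hlogρneg : Real.log (ρ r) < 0 := Real.log_neg hρ0 hρ1
    have step1 : f r ≤ Real.log (expExitTime P M x (ρ r)).toReal / Real.log r := by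
      show Real.log (expExitTime P (fun t ω => φ (M t ω)) (φ x) r).toReal / Real.log r ≤ _
      rw [div_eq_mul_inv, div_eq_mul_inv]
      exact mul_le_mul_of_nonpos_right hlogba (inv_nonpos.mpr hlogrneg.le)
    refine step1.trans_eq ?_
    show _ = Real.log (expExitTime P M x (ρ r)).toReal / Real.log (ρ r) *
      (Real.log (ρ r) / Real.log r)
    rw [div_mul_div_cancel₀]
    exact ne_of_lt hlogρneg
  obtain ⟨r0, hr0fin, hr0pos⟩ := (hfin.and self_mem_nhdsWithin).exists
  set K := expExitTime P (fun t ω => φ (M t ω)) (φ x) r0 with hK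
  have hk : 0 < K.toReal := ENNReal.toReal_pos hr0fin.2.2.1 hr0fin.2.2.2
  have hevlb : ∀ᶠ r in 𝓝[>] (0:ℝ), Real.log K.toReal / Real.log r ≤ f r := by
    filter_upwards [Ioo_mem_nhdsGT_of_mem
      (Set.left_mem_Ico.mpr (lt_min hr0pos one_pos)), hfin] with r hr hfr
    have hr0' : (0:ℝ) < r := hr.1
    have hrlt : r < 1 := lt_of_lt_of_le hr.2 (min_le_right _ _)
    have hrr0 : r ≤ r0 := (lt_of_lt_of_le hr.2 (min_le_left _ _)).le
    have hAK : expExitTime P (fun t ω => φ (M t ω)) (φ x) r ≤ K :=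
      lintegral_mono fun ω => exitTime_anti _ _ hrr0 ω
    have ha : 0 < (expExitTime P (fun t ω => φ (M t ω)) (φ x) r).toReal :=
      ENNReal.toReal_pos hfr.2.2.1 (ne_top_of_le_ne_top hr0fin.2.2.2 hAK)
    have hak := ENNReal.toReal_mono hr0fin.2.2.2 hAK
    have hlg := Real.log_le_log ha hak
    have hlogrneg : Real.log r < 0 := Real.log_neg hr0' hrlt
    show _ ≤ Real.log (expExitTime P (fun t ω => φ (M t ω)) (φ x) r).toReal / Real.log r
    rw [div_eq_mul_inv, div_eq_mul_inv]
    exact mul_le_mul_of_nonpos_right hlg (inv_nonpos.mpr hlogrneg.le)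
  have hcobdd : IsCoboundedUnder (· ≤ ·) (𝓝[>] (0:ℝ)) f := by
    have hev1 : ∀ᶠ r in 𝓝[>] (0:ℝ), (-1:ℝ) ≤ f r := by
      filter_upwards [hevlb, (const_div_log_tendsto (Real.log K.toReal)).eventually
        (eventually_gt_nhds (by norm_num : (-1:ℝ) < 0))] with r h1 h2
      linarith
    exact IsCoboundedUnder.of_frequently_ge hev1.frequently
  calc limsup f (𝓝[>] (0:ℝ)) ≤ limsup h (𝓝[>] (0:ℝ)) :=
        limsup_le_limsup hev hcobdd Th.isBoundedUnder_le
    _ = w * (1/β) := Th.limsup_eq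
    _ = w / β := by ring

/-- If `M` is a right-continuous process on `X` started at `x`, `φ : X → Y` is
locally `α`-Hölder regular at `x` for some `α ∈ (0,1)`, the local walk dimension
of `M` at `x` exists and equals `w`, and all the expected exit times involved are
finite and positive for small radii, then the upper local walk dimension of the
image process `φ ∘ M` at `φ x` is at most `w / α`. -/
theorem upper_walk_dim_image_le
    {Ω X Y : Type*} [MetricSpace X] [MetricSpace Y] [MeasurableSpace Ω]
    (P : Measure Ω) [IsProbabilityMeasure P]
    (M : NNReal → Ω → X) (x : X)
    (hM0 : ∀ᵐ ω ∂P, M 0 ω = x)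
    (hrc : ∀ᵐ ω ∂P, ∀ t : NNReal, ContinuousWithinAt (fun s => M s ω) (Set.Ici t) t)
    (φ : X → Y) (α : ℝ) (hα : α ∈ Set.Ioo (0 : ℝ) 1)
    (hreg : LocallyHolderRegularAt φ x α)
    (w : ℝ)
    (hdimw : Tendsto (logExitRatio P M x) (𝓝[>] 0) (𝓝 w))
    (hfin : ∀ᶠ r in 𝓝[>] (0 : ℝ),
      expExitTime P M x r ≠ 0 ∧ expExitTime P M x r ≠ ⊤ ∧
      expExitTime P (fun t ω => φ (M t ω)) (φ x) r ≠ 0 ∧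
      expExitTime P (fun t ω => φ (M t ω)) (φ x) r ≠ ⊤) :
    limsup (logExitRatio P (fun t ω => φ (M t ω)) (φ x)) (𝓝[>] 0) ≤ w / α := by
  have hα0 : 0 < α := hα.1
  refine le_of_forall_gt_imp_ge_of_dense fun c hc => ?_
  obtain ⟨ε, hεpos, hεc⟩ : ∃ ε, 0 < ε ∧ w / α + ε = c :=
    ⟨c - w / α, sub_pos.mpr hc, by ring⟩
  have hwpos : (0:ℝ) < |w| + 1 := by positivity
  obtain ⟨d, hdpos, hd2⟩ : ∃ d, 0 < d ∧ |w| * d ≤ ε * α^2 / 2 := by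
    refine ⟨ε * α^2 / (2*(|w|+1)), by positivity, ?_⟩
    have heq : |w| * (ε * α^2 / (2*(|w|+1))) = (|w| / (|w|+1)) * (ε * α^2 / 2) := by
      field_simp
      try exact Or.inl trivial
    rw [heq]
    have h5 : |w| / (|w|+1) ≤ 1 := (div_le_one hwpos).mpr (by linarith [abs_nonneg w])
    calc (|w| / (|w|+1)) * (ε * α^2 / 2) ≤ 1 * (ε * α^2 / 2) :=
          mul_le_mul_of_nonneg_right h5 (by positivity)
      _ = ε * α^2 / 2 := one_mul _
  have hγα : max (α/2) (α - d) < α := max_lt (by linarith) (by linarith)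
  obtain ⟨β, hβmem, hγβ, hβα⟩ := hreg.exists_between hγα
  obtain ⟨hβ0, hβH⟩ := hβmem
  have hmain := limsup_ratio_le_div P M x φ hβ0 hβH hdimw hfin
  refine hmain.trans ?_
  have hβhalf : α/2 ≤ β := le_of_lt (lt_of_le_of_lt (le_max_left _ _) hγβ)
  have hβd : α - d < β := lt_of_le_of_lt (le_max_right _ _) hγβ
  have hαβ : 0 < α * β := mul_pos hα0 hβ0
  have hstep : w * α - w * β ≤ ε * (α * β) := by
    have e1 : w * α - w * β = w * (α - β) := by ring
    have e2 : w * (α - β) ≤ |w| * (α - β) :=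
      mul_le_mul_of_nonneg_right (le_abs_self w) (by linarith)
    have e3 : |w| * (α - β) ≤ |w| * d :=
      mul_le_mul_of_nonneg_left (by linarith) (abs_nonneg w)
    have e5 : ε * α^2 / 2 ≤ ε * (α * β) := by
      have h6 := mul_le_mul_of_nonneg_left hβhalf (le_of_lt (mul_pos hεpos hα0))
      nlinarith
    linarith
  have hdiff : w / β - w / α = (w * α - w * β) / (α * β) := by
    field_simp
  have hfin2 : (w * α - w * β) / (α * β) ≤ ε :=
    (div_le_iff₀ hαβ).mpr (by linarith [hstep])
  linarith [hdiff ▸ hfin2]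
end

section
/- Let (X,d_X) and (Y,d_Y) be metric spaces and let φ : X → Y satisfy the bi-Lipschitz condition (1/C)·d_X(u,v) ≤ d_Y(φ(u),φ(v)) ≤ C·d_X(u,v) for all u,v ∈ X and some constant C ≥ 1. Let M be a stochastic process on X with right-continuous paths started at x ∈ X such that E[τ_M(r)] ∈ (0,∞) for all sufficiently small r > 0 and the local walk dimension dimw(X,M;x) exists and equals w. Then the local walk dimension of the image process φ∘M at φ(x) exists and dimw(Y, φ∘M; φ(x)) = w. -/
open MeasureTheory Filter Topology

/-- Monotonicity of the exit time with respect to set inclusion of the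
"outside" time sets. -/
lemma exitTime_le_of_subset {Ω X Y : Type*} [MetricSpace X] [MetricSpace Y]
    {M : NNReal → Ω → X} {N : NNReal → Ω → Y} {x : X} {y : Y} {r s : ℝ} {ω : Ω}
    (h : ∀ t : NNReal, N t ω ∉ Metric.ball y s → M t ω ∉ Metric.ball x r) :
    exitTime M x r ω ≤ exitTime N y s ω := by
  apply sInf_le_sInf
  exact Set.image_mono fun t ht => h t ht

/-- Scaled `logExitRatio` limit: if `logExitRatio → w` then so does the version
where the radius is rescaled by a positive constant `c`. -/
lemma tendsto_logExitRatio_scale {Ω X : Type*} [MetricSpace X] [MeasurableSpace Ω]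
    (P : Measure Ω) (M : NNReal → Ω → X) (x : X) (w : ℝ)
    (hdimw : Tendsto (logExitRatio P M x) (𝓝[>] 0) (𝓝 w))
    (c : ℝ) (hc : 0 < c) :
    Tendsto (fun r => Real.log (expExitTime P M x (c * r)).toReal / Real.log r)
      (𝓝[>] 0) (𝓝 w) := by
  have hmul : Tendsto (fun r : ℝ => c * r) (𝓝[>] 0) (𝓝[>] 0) := by
    apply tendsto_nhdsWithin_of_tendsto_nhds_of_eventually_within
    · have : Tendsto (fun r : ℝ => c * r) (𝓝 0) (𝓝 (c * 0)) :=
        (continuous_const.mul continuous_id).tendsto 0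
      simpa using this.mono_left nhdsWithin_le_nhds
    · filter_upwards [self_mem_nhdsWithin] with r hr
      exact mul_pos hc hr
  have h1 : Tendsto (fun r => logExitRatio P M x (c * r)) (𝓝[>] 0) (𝓝 w) :=
    hdimw.comp hmul
  -- (log c)/(log r) → 0
  have hlog : Tendsto Real.log (𝓝[>] (0 : ℝ)) atBot :=
    Real.tendsto_log_nhdsGT_zero
  have hinv : Tendsto (fun r : ℝ => (-Real.log r)⁻¹) (𝓝[>] 0) (𝓝 0) :=
    tendsto_inv_atTop_zero.comp (tendsto_neg_atBot_atTop.comp hlog)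
  have hfrac : Tendsto (fun r : ℝ => Real.log c / Real.log r) (𝓝[>] 0) (𝓝 0) := by
    have := hinv.const_mul (-Real.log c)
    rw [mul_zero] at this
    refine this.congr fun r => ?_
    rw [inv_neg, mul_neg, neg_mul, neg_neg, div_eq_mul_inv]
  have h2 : Tendsto (fun r : ℝ => (Real.log c + Real.log r) / Real.log r)
      (𝓝[>] 0) (𝓝 1) := by
    have heq : ∀ᶠ r in 𝓝[>] (0 : ℝ),
        Real.log c / Real.log r + 1 = (Real.log c + Real.log r) / Real.log r := by
      filter_upwards [self_mem_nhdsWithin, Ioo_mem_nhdsGT_of_mem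
        (Set.mem_Ico.mpr ⟨le_refl (0:ℝ), one_pos⟩)] with r hr hr1
      have hlr : Real.log r ≠ 0 :=
        ne_of_lt (Real.log_neg hr1.1 hr1.2)
      field_simp
    have := hfrac.add (tendsto_const_nhds : Tendsto (fun _ : ℝ => (1:ℝ)) (𝓝[>] 0) (𝓝 1))
    rw [zero_add] at this
    exact Tendsto.congr' heq this
  have hprod := h1.mul h2
  rw [mul_one] at hprod
  refine Tendsto.congr' ?_ hprod
  have hsmall : ∀ᶠ r in 𝓝[>] (0 : ℝ), c * r < 1 := by
    have : Tendsto (fun r : ℝ => c * r) (𝓝[>] 0) (𝓝 0) :=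
      hmul.mono_right nhdsWithin_le_nhds
    exact this.eventually (eventually_lt_nhds one_pos)
  filter_upwards [self_mem_nhdsWithin, hsmall] with r hr hr1
  have hcr : (0:ℝ) < c * r := mul_pos hc hr
  have hlcr : Real.log (c * r) ≠ 0 := ne_of_lt (Real.log_neg hcr hr1)
  have hlr : Real.log (c * r) = Real.log c + Real.log r :=
    Real.log_mul (ne_of_gt hc) (ne_of_gt hr)
  simp only [logExitRatio, hlr]
  rw [div_mul_div_comm, mul_comm (Real.log c + Real.log r) (Real.log r),
    mul_div_mul_right _ _ (hlr ▸ hlcr)]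

/-- Invariance of the local walk dimension under bi-Lipschitz maps: if
`φ : X → Y` satisfies `(1/C)·d(u,v) ≤ d(φ u, φ v) ≤ C·d(u,v)` for some `C ≥ 1`,
`M` is a right-continuous process on `X` started at `x` whose expected exit
times are positive and finite for all small radii, and the local walk dimension
of `M` at `x` exists and equals `w`, then the local walk dimension of the image
process `φ ∘ M` at `φ x` exists and equals `w`. -/
theorem walk_dim_invariant_biLipschitz
    {Ω X Y : Type*} [MetricSpace X] [MetricSpace Y] [MeasurableSpace Ω]
    (P : Measure Ω) [IsProbabilityMeasure P]
    (M : NNReal → Ω → X) (x : X)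
    (hM0 : ∀ᵐ ω ∂P, M 0 ω = x)
    (hrc : ∀ᵐ ω ∂P, ∀ t : NNReal, ContinuousWithinAt (fun s => M s ω) (Set.Ici t) t)
    (φ : X → Y) (C : ℝ) (hC : 1 ≤ C)
    (hbilip : ∀ u v : X,
      (1 / C) * dist u v ≤ dist (φ u) (φ v) ∧ dist (φ u) (φ v) ≤ C * dist u v)
    (hfin : ∀ᶠ r in 𝓝[>] (0 : ℝ),
      expExitTime P M x r ≠ 0 ∧ expExitTime P M x r ≠ ⊤)
    (w : ℝ)
    (hdimw : Tendsto (logExitRatio P M x) (𝓝[>] 0) (𝓝 w)) :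
    Tendsto (logExitRatio P (fun t ω => φ (M t ω)) (φ x)) (𝓝[>] 0) (𝓝 w) := by
  have hC0 : (0:ℝ) < C := lt_of_lt_of_le one_pos hC
  have hC0' : C ≠ 0 := ne_of_gt hC0
  have hmul : ∀ c : ℝ, 0 < c → Tendsto (fun r : ℝ => c * r) (𝓝[>] 0) (𝓝[>] 0) := by
    intro c hc
    apply tendsto_nhdsWithin_of_tendsto_nhds_of_eventually_within
    · have : Tendsto (fun r : ℝ => c * r) (𝓝 0) (𝓝 (c * 0)) :=
        (continuous_const.mul continuous_id).tendsto 0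
      simpa using this.mono_left nhdsWithin_le_nhds
    · filter_upwards [self_mem_nhdsWithin] with r hr
      exact mul_pos hc hr
  -- pointwise exit-time comparison
  have hup : ∀ r : ℝ, ∀ ω, exitTime (fun t ω => φ (M t ω)) (φ x) r ω ≤
      exitTime M x (C * r) ω := by
    intro r ω
    apply exitTime_le_of_subset
    intro t ht
    simp only [Metric.mem_ball, not_lt] at ht ⊢
    calc r = (1 / C) * (C * r) := by field_simp
      _ ≤ (1 / C) * dist (M t ω) x := by
          apply mul_le_mul_of_nonneg_left ht
          positivity
      _ ≤ dist (φ (M t ω)) (φ x) := (hbilip (M t ω) x).1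
  have hlo : ∀ r : ℝ, ∀ ω, exitTime M x ((1 / C) * r) ω ≤
      exitTime (fun t ω => φ (M t ω)) (φ x) r ω := by
    intro r ω
    apply exitTime_le_of_subset
    intro t ht
    simp only [Metric.mem_ball, not_lt] at ht ⊢
    rw [div_mul_eq_mul_div, one_mul, div_le_iff₀ hC0, mul_comm]
    calc r ≤ dist (φ (M t ω)) (φ x) := ht
      _ ≤ C * dist (M t ω) x := (hbilip (M t ω) x).2
  have hEup : ∀ r : ℝ, expExitTime P (fun t ω => φ (M t ω)) (φ x) r ≤
      expExitTime P M x (C * r) := fun r => lintegral_mono (hup r)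
  have hElo : ∀ r : ℝ, expExitTime P M x ((1 / C) * r) ≤
      expExitTime P (fun t ω => φ (M t ω)) (φ x) r := fun r => lintegral_mono (hlo r)
  -- squeeze
  have hgC := tendsto_logExitRatio_scale P M x w hdimw C hC0
  have hg1C := tendsto_logExitRatio_scale P M x w hdimw (1 / C) (by positivity)
  have hfinC : ∀ᶠ r in 𝓝[>] (0:ℝ),
      expExitTime P M x (C * r) ≠ 0 ∧ expExitTime P M x (C * r) ≠ ⊤ :=
    (hmul C hC0).eventually hfin
  have hfin1C : ∀ᶠ r in 𝓝[>] (0:ℝ),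
      expExitTime P M x ((1 / C) * r) ≠ 0 ∧ expExitTime P M x ((1 / C) * r) ≠ ⊤ :=
    (hmul (1 / C) (by positivity)).eventually hfin
  have hsmall : ∀ᶠ r in 𝓝[>] (0:ℝ), r < 1 :=
    eventually_nhdsWithin_of_eventually_nhds (eventually_lt_nhds one_pos)
  refine tendsto_of_tendsto_of_tendsto_of_le_of_le' hgC hg1C ?_ ?_
  · filter_upwards [hfinC, hfin1C, hsmall, self_mem_nhdsWithin] with r hC' h1' hr1 hr0
    have hlogr : Real.log r < 0 := Real.log_neg hr0 hr1
    have hEφtop : expExitTime P (fun t ω => φ (M t ω)) (φ x) r ≠ ⊤ :=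
      ne_top_of_le_ne_top hC'.2 (hEup r)
    have hφpos : 0 < (expExitTime P (fun t ω => φ (M t ω)) (φ x) r).toReal := by
      apply ENNReal.toReal_pos _ hEφtop
      intro h0
      exact h1'.1 (le_antisymm (h0 ▸ hElo r) zero_le)
    have hle : (expExitTime P (fun t ω => φ (M t ω)) (φ x) r).toReal ≤
        (expExitTime P M x (C * r)).toReal :=
      ENNReal.toReal_le_toReal hEφtop hC'.2 |>.mpr (hEup r)
    exact div_le_div_of_nonpos_of_le (le_of_lt hlogr) (Real.log_le_log hφpos hle)
  · filter_upwards [hfinC, hfin1C, hsmall, self_mem_nhdsWithin] with r hC' h1' hr1 hr0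
    have hlogr : Real.log r < 0 := Real.log_neg hr0 hr1
    have hEφtop : expExitTime P (fun t ω => φ (M t ω)) (φ x) r ≠ ⊤ :=
      ne_top_of_le_ne_top hC'.2 (hEup r)
    have h1pos : 0 < (expExitTime P M x ((1 / C) * r)).toReal :=
      ENNReal.toReal_pos h1'.1 h1'.2
    have hle : (expExitTime P M x ((1 / C) * r)).toReal ≤
        (expExitTime P (fun t ω => φ (M t ω)) (φ x) r).toReal :=
      ENNReal.toReal_le_toReal h1'.2 hEφtop |>.mpr (hElo r)
    exact div_le_div_of_nonpos_of_le (le_of_lt hlogr) (Real.log_le_log h1pos hle)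
end

section
/- Let f : ℝ → ℝ be continuous, T ∈ ℝ, and α ∈ (0,1). Assume: (i) for every β ∈ (0,α) there exist δ > 0 and C > 0 such that |f(t) − f(T)| ≤ C·|t−T|^β whenever |t−T| < δ; (ii) for every β > α there exists a sequence t_n ↓ T with t_n > T and |f(t_n) − f(T)| > (t_n − T)^β. For r > 0 define Θ⁺_r(T) := inf{ t > T : max(t−T, |f(t)−f(T)|) ≥ r }. Then limsup_{r→0⁺} log(Θ⁺_r(T) − T)/log r = 1/α. -/
open Filter Topology

/-- `Θ⁺_r(T)`: the first time `t > T` at which the point `(t, f t)` of the graph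
of `f` leaves the open ball of radius `r` around `(T, f T)` in the maximum
metric, i.e. `inf { t > T : max (t − T) |f t − f T| ≥ r }`. -/
noncomputable def thetaPlus (f : ℝ → ℝ) (T r : ℝ) : ℝ :=
  sInf {t : ℝ | T < t ∧ r ≤ max (t - T) |f t - f T|}

lemma thetaPlus_spec (f : ℝ → ℝ) (hf : Continuous f) (T : ℝ) {r : ℝ} (hr : 0 < r) :
    T < thetaPlus f T r ∧ thetaPlus f T r - T ≤ r ∧
      r ≤ max (thetaPlus f T r - T) |f (thetaPlus f T r) - f T| := by
  set S : Set ℝ := {t : ℝ | T < t ∧ r ≤ max (t - T) |f t - f T|} with hS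
  have hmem : T + r ∈ S := by
    constructor
    · linarith
    · simp only [add_sub_cancel_left]
      exact le_max_left _ _
  have hne : S.Nonempty := ⟨T + r, hmem⟩
  have hbd : BddBelow S := ⟨T, fun t ht => le_of_lt ht.1⟩
  have hle : thetaPlus f T r ≤ T + r := csInf_le hbd hmem
  -- lower bound via continuity
  obtain ⟨ε, hε, hcont⟩ := Metric.continuousAt_iff.1 (hf.continuousAt (x := T)) r hr
  have hlow : T + min ε r ≤ thetaPlus f T r := by
    apply le_csInf hne
    intro t ht
    by_contra hlt
    push_neg at hlt
    have h1 : t - T < ε := lt_of_lt_of_le (by linarith) (min_le_left _ _)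
    have h2 : t - T < r := lt_of_lt_of_le (by linarith) (min_le_right _ _)
    have habs : |t - T| < ε := by
      rw [abs_of_pos (by linarith [ht.1])]; exact h1
    have h3 : |f t - f T| < r := by
      have := hcont (show dist t T < ε by rwa [Real.dist_eq])
      rwa [Real.dist_eq] at this
    exact absurd ht.2 (not_le.2 (max_lt h2 h3))
  have hTlt : T < thetaPlus f T r := lt_of_lt_of_le (by have := lt_min hε hr; linarith) hlow
  refine ⟨hTlt, by linarith, ?_⟩
  have hclosed : IsClosed {t : ℝ | r ≤ max (t - T) |f t - f T|} := by
    have : Continuous fun t : ℝ => max (t - T) |f t - f T| := by fun_prop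
    exact isClosed_le continuous_const this
  have hsub : closure S ⊆ {t : ℝ | r ≤ max (t - T) |f t - f T|} :=
    closure_minimal (fun t ht => ht.2) hclosed
  exact hsub (csInf_mem_closure hne hbd)

/-- Let `f : ℝ → ℝ` be continuous, `T ∈ ℝ` and `α ∈ (0,1)`.  Assume that
(i) `f` is locally `β`-Hölder continuous at `T` for every `β ∈ (0,α)`, and
(ii) for every `β > α` there is a sequence `t_n ↓ T`, `t_n > T`, with
`|f t_n − f T| > (t_n − T)^β`.  Then
`limsup_{r→0⁺} log (Θ⁺_r(T) − T)/log r = 1/α`. -/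
theorem limsup_log_thetaPlus
    (f : ℝ → ℝ) (hf : Continuous f) (T : ℝ) (α : ℝ) (hα : α ∈ Set.Ioo (0 : ℝ) 1)
    (hi : ∀ β ∈ Set.Ioo (0 : ℝ) α, ∃ δ > (0 : ℝ), ∃ C > (0 : ℝ),
      ∀ t : ℝ, |t - T| < δ → |f t - f T| ≤ C * |t - T| ^ β)
    (hii : ∀ β > α, ∃ t : ℕ → ℝ, (∀ n, T < t n) ∧ StrictAnti t ∧
      Tendsto t atTop (𝓝 T) ∧ ∀ n, (t n - T) ^ β < |f (t n) - f T|) :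
    limsup (fun r : ℝ => Real.log (thetaPlus f T r - T) / Real.log r) (𝓝[>] 0)
      = 1 / α := by
  obtain ⟨hα0, hα1⟩ := hα
  set L : ℝ → ℝ := fun r => Real.log (thetaPlus f T r - T) / Real.log r with hLdef
  have hαinv : (1 : ℝ) < 1 / α := one_lt_one_div hα0 hα1
  have hev01 : ∀ᶠ r in 𝓝[>] (0 : ℝ), 0 < r ∧ r < 1 := by
    filter_upwards [Ioo_mem_nhdsGT_of_mem (show (0:ℝ) ∈ Set.Ico 0 1 by simp)] with r hr
    exact ⟨hr.1, hr.2⟩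
  -- L r ≥ 1 eventually
  have hL1 : ∀ᶠ r in 𝓝[>] (0 : ℝ), 1 ≤ L r := by
    filter_upwards [hev01] with r hr
    obtain ⟨hr0, hr1⟩ := hr
    obtain ⟨h1, h2, _⟩ := thetaPlus_spec f hf T hr0
    have hθ0 : 0 < thetaPlus f T r - T := sub_pos.2 h1
    have hlogr : Real.log r < 0 := Real.log_neg hr0 hr1
    have hlog : Real.log (thetaPlus f T r - T) ≤ Real.log r := Real.log_le_log hθ0 h2
    rw [hLdef]
    simp only
    rw [le_div_iff_of_neg hlogr]
    linarith
  -- eventual upper bound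
  have hub : ∀ c : ℝ, 1 / α < c → ∀ᶠ r in 𝓝[>] (0 : ℝ), L r ≤ c := by
    intro c hc
    have h1c : (1 : ℝ) < c := hαinv.trans hc
    have hc0 : (0 : ℝ) < c := by linarith
    have hcα : 1 / c < α := by
      rw [div_lt_iff₀ hc0]
      rw [div_lt_iff₀ hα0] at hc
      linarith
    set β : ℝ := (1 / c + α) / 2 with hβdef
    have hβ0 : 0 < β := by positivity
    have hβα : β < α := by
      rw [hβdef]; linarith
    have hβc : 1 / β < c := by
      rw [div_lt_iff₀ hβ0]
      have h1 : 1 / c < β := by rw [hβdef]; linarith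
      rw [div_lt_iff₀ hc0] at h1
      linarith
    clear_value β
    obtain ⟨δ, hδ, C, hC, hHold⟩ := hi β ⟨hβ0, hβα⟩
    -- the auxiliary bound tends to 1/β
    have hA : Tendsto (fun r : ℝ => 1 / β - Real.log C / (β * Real.log r)) (𝓝[>] (0 : ℝ))
        (𝓝 (1 / β)) := by
      have h1 : Tendsto (fun r : ℝ => β * Real.log r) (𝓝[>] (0 : ℝ)) atBot :=
        (Real.tendsto_log_nhdsGT_zero).const_mul_atBot hβ0
      have h2 : Tendsto (fun r : ℝ => -(β * Real.log r)) (𝓝[>] (0 : ℝ)) atTop :=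
        tendsto_neg_atBot_atTop.comp h1
      have h3 : Tendsto (fun r : ℝ => (-Real.log C) / -(β * Real.log r)) (𝓝[>] (0 : ℝ))
          (𝓝 0) := h2.const_div_atTop _
      simp only [neg_div_neg_eq] at h3
      simpa using tendsto_const_nhds.sub h3
    have hAev : ∀ᶠ r in 𝓝[>] (0 : ℝ), 1 / β - Real.log C / (β * Real.log r) < c :=
      hA.eventually_lt_const hβc
    have hδev : ∀ᶠ r in 𝓝[>] (0 : ℝ), r < δ :=
      eventually_nhdsWithin_of_eventually_nhds (eventually_of_mem (Iio_mem_nhds hδ) fun x hx => hx)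
    filter_upwards [hev01, hAev, hδev] with r hr hArc hrδ
    obtain ⟨hr0, hr1⟩ := hr
    obtain ⟨hT, hθr, hmax⟩ := thetaPlus_spec f hf T hr0
    set θ : ℝ := thetaPlus f T r - T with hθdef
    have hθ0 : 0 < θ := sub_pos.2 hT
    have hlogr : Real.log r < 0 := Real.log_neg hr0 hr1
    rcases le_or_gt r θ with hcase | hcase
    · have hθeq : θ = r := le_antisymm hθr hcase
      have : L r = 1 := by
        rw [hLdef]; simp only [← hθdef, hθeq]
        exact div_self (ne_of_lt hlogr)
      linarith
    · have hfb : r ≤ |f (thetaPlus f T r) - f T| := by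
        rcases le_max_iff.1 hmax with h | h
        · exact absurd h (not_le.2 hcase)
        · exact h
      have habs : |thetaPlus f T r - T| = θ := abs_of_pos hθ0
      have hHo : |f (thetaPlus f T r) - f T| ≤ C * θ ^ β := by
        have := hHold (thetaPlus f T r) (by rw [habs]; linarith)
        rwa [habs] at this
      have hrC : r ≤ C * θ ^ β := hfb.trans hHo
      have hlog : Real.log r ≤ Real.log C + β * Real.log θ := by
        calc Real.log r ≤ Real.log (C * θ ^ β) := Real.log_le_log hr0 hrC
          _ = Real.log C + β * Real.log θ := by
              rw [Real.log_mul (ne_of_gt hC) (ne_of_gt (Real.rpow_pos_of_pos hθ0 β)),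
                Real.log_rpow hθ0]
      have hkey : L r ≤ 1 / β - Real.log C / (β * Real.log r) := by
        rw [hLdef]
        simp only [← hθdef]
        rw [div_le_iff_of_neg hlogr]
        have heq : (1 / β - Real.log C / (β * Real.log r)) * Real.log r
            = (Real.log r - Real.log C) / β := by
          have hβne : β ≠ 0 := ne_of_gt hβ0
          have hlrne : Real.log r ≠ 0 := ne_of_lt hlogr
          field_simp
        rw [heq, div_le_iff₀ hβ0]
        linarith
      linarith
  have hbddAbove : IsBoundedUnder (· ≤ ·) (𝓝[>] (0 : ℝ)) L :=
    ⟨1 / α + 1, eventually_map.2 (hub (1 / α + 1) (by linarith))⟩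
  have hcobdd : IsCoboundedUnder (· ≤ ·) (𝓝[>] (0 : ℝ)) L :=
    isCoboundedUnder_le_of_eventually_le _ hL1
  have hupper : limsup L (𝓝[>] (0 : ℝ)) ≤ 1 / α :=
    le_of_forall_gt_imp_ge_of_dense fun c hc => limsup_le_of_le hcobdd (hub c hc)
  -- lower bound
  have hlb : ∀ β : ℝ, α < β → 1 / β ≤ limsup L (𝓝[>] (0 : ℝ)) := by
    intro β hβ
    have hβ0 : 0 < β := hα0.trans hβ
    obtain ⟨t, htT, _, htend, hbig⟩ := hii β hβ
    set s : ℕ → ℝ := fun n => t n - T with hsdef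
    have hs0 : ∀ n, 0 < s n := fun n => sub_pos.2 (htT n)
    have hstend : Tendsto s atTop (𝓝 0) := by
      have := htend.sub_const T
      simpa using this
    set rn : ℕ → ℝ := fun n => s n ^ β with hrndef
    have hrn0 : ∀ n, 0 < rn n := fun n => Real.rpow_pos_of_pos (hs0 n) β
    have hrntend : Tendsto rn atTop (𝓝[>] (0 : ℝ)) := by
      rw [tendsto_nhdsWithin_iff]
      refine ⟨?_, Eventually.of_forall fun n => hrn0 n⟩
      have hcont := (Real.continuousAt_rpow_const 0 β (Or.inr hβ0.le)).tendsto
      have := hcont.comp hstend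
      rwa [Real.zero_rpow (ne_of_gt hβ0)] at this
    have hev : ∀ᶠ n in atTop, 1 / β ≤ L (rn n) := by
      filter_upwards [hstend.eventually_lt_const one_pos] with n hn1
      obtain ⟨hT', hθr', _⟩ := thetaPlus_spec f hf T (hrn0 n)
      have hθn : thetaPlus f T (rn n) ≤ t n :=
        csInf_le ⟨T, fun u hu => le_of_lt hu.1⟩
          ⟨htT n, le_max_of_le_right (le_of_lt (hbig n))⟩
      have hθpos : 0 < thetaPlus f T (rn n) - T := sub_pos.2 hT'
      have hlogs : Real.log (s n) < 0 := Real.log_neg (hs0 n) hn1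
      have hlogrn : Real.log (rn n) = β * Real.log (s n) := Real.log_rpow (hs0 n) β
      have hlogθ : Real.log (thetaPlus f T (rn n) - T) ≤ Real.log (s n) :=
        Real.log_le_log hθpos (by rw [hsdef]; simp only; linarith)
      rw [hLdef]
      simp only
      rw [hlogrn, le_div_iff_of_neg (by nlinarith : β * Real.log (s n) < 0)]
      have heq : 1 / β * (β * Real.log (s n)) = Real.log (s n) := by
        field_simp
      linarith
    exact le_limsup_of_frequently_le (hrntend.frequently hev.frequently) hbddAbove
  have hlower : 1 / α ≤ limsup L (𝓝[>] (0 : ℝ)) := by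
    apply le_of_forall_lt_imp_le_of_dense
    intro c hc
    rcases le_or_gt c 0 with hc0 | hc0
    · have := hlb (α + 1) (by linarith)
      have h1 : (0:ℝ) < 1 / (α + 1) := by positivity
      linarith
    · have hcα : α < 1 / c := by
        rw [lt_div_iff₀ hc0]
        rw [lt_div_iff₀ hα0] at hc
        linarith
      set β : ℝ := (α + 1 / c) / 2 with hβdef
      have hβ0 : 0 < β := by positivity
      have hαβ : α < β := by rw [hβdef]; linarith
      have hcβ : c < 1 / β := by
        rw [lt_div_iff₀ hβ0]
        have h1 : β < 1 / c := by rw [hβdef]; linarith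
        rw [lt_div_iff₀ hc0] at h1
        linarith
      exact le_trans hcβ.le (hlb β hαβ)
  exact le_antisymm hupper hlower
end
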